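/- arXiv:1506.02686 — 2 statements merged into one kernel-verified Lean document; each statement's English description precedes it below -/
import Mathlib

section
/- Let x_1, …, x_N and x be points of a normed real vector space, let w_1, …, w_N be nonnegative real weights with N* := Σ_{k=1}^N w_k > 0, and let K : ℝ → ℝ be a kernel satisfying 0 ≤ K(t) ≤ K(0) for all t ≥ 0. Define the weighted kernel density estimate f*(x) := Σ_{k=1}^N (w_k / N*) K(‖x_k − x‖), and, for a fixed index i ∈ {1, …, N} and ε > 0, the perturbed estimate f̂(x) := (Σ_{k ≠ i} w_k K(‖x_k − x‖) + (w_i + ε) K(‖x_i − x‖)) / (ε + N*), obtained by increasing the single weight w_i by ε. Then |f̂(x) − f*(x)| ≤ (ε / (N* + ε)) K(0). -/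
open Finset

/-- Kernel-density perturbation bound (Lemma 1): increasing a single weight `w i`
by `ε > 0` and renormalizing changes the weighted kernel density estimate at `x`
by at most `(ε / (N* + ε)) * K 0`. -/
theorem kernel_density_perturbation_bound
    {E : Type*} [NormedAddCommGroup E] [NormedSpace ℝ E]
    (N : ℕ) (x : Fin N → E) (pt : E) (w : Fin N → ℝ)
    (hw : ∀ k, 0 ≤ w k)
    (K : ℝ → ℝ) (hK : ∀ t : ℝ, 0 ≤ t → 0 ≤ K t ∧ K t ≤ K 0)
    (Nstar : ℝ) (hNstar : Nstar = ∑ k, w k) (hNpos : 0 < Nstar)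
    (i : Fin N) (ε : ℝ) (hε : 0 < ε)
    (fstar fhat : ℝ)
    (hfstar : fstar = ∑ k, (w k / Nstar) * K ‖x k - pt‖)
    (hfhat : fhat =
      (∑ k ∈ univ.erase i, w k * K ‖x k - pt‖ + (w i + ε) * K ‖x i - pt‖) /
        (ε + Nstar)) :
    |fhat - fstar| ≤ (ε / (Nstar + ε)) * K 0 := by
  set S : ℝ := ∑ k, w k * K ‖x k - pt‖ with hS
  set Ki : ℝ := K ‖x i - pt‖ with hKi
  have hsum : ∑ k ∈ univ.erase i, w k * K ‖x k - pt‖ + w i * Ki = S :=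
    Finset.sum_erase_add _ _ (mem_univ i)
  have hfhat' : fhat = (S + ε * Ki) / (ε + Nstar) := by
    rw [hfhat, ← hsum]; congr 1; ring
  have hfstar' : fstar = S / Nstar := by
    rw [hfstar, hS, Finset.sum_div]
    exact Finset.sum_congr rfl fun k _ => by ring
  have hK0 : 0 ≤ K 0 := (hK 0 le_rfl).1
  have hKib : 0 ≤ Ki ∧ Ki ≤ K 0 := hK _ (norm_nonneg _)
  have hSle : S ≤ Nstar * K 0 := by
    rw [hNstar, Finset.sum_mul]
    exact Finset.sum_le_sum fun k _ =>
      mul_le_mul_of_nonneg_left (hK _ (norm_nonneg _)).2 (hw k)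
  have hSnn : 0 ≤ S :=
    Finset.sum_nonneg fun k _ => mul_nonneg (hw k) (hK _ (norm_nonneg _)).1
  have hden : 0 < ε + Nstar := by linarith
  have hdiff : fhat - fstar = ε * (Nstar * Ki - S) / (Nstar * (ε + Nstar)) := by
    rw [hfhat', hfstar']
    field_simp
    ring
  rw [hdiff, abs_le]
  constructor
  all_goals
    have key : ε / (Nstar + ε) * K 0 * (Nstar * (ε + Nstar)) = ε * K 0 * Nstar := by
      field_simp; ring
    have h1 : 0 ≤ Nstar * Ki := mul_nonneg hNpos.le hKib.1
    have h3 : Nstar * Ki ≤ Nstar * K 0 := mul_le_mul_of_nonneg_left hKib.2 hNpos.le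
  · rw [neg_le, ← neg_div, div_le_iff₀ (by positivity), key]
    nlinarith [mul_le_mul_of_nonneg_left hSle hε.le, mul_nonneg hε.le h1]
  · rw [div_le_iff₀ (by positivity), key]
    nlinarith [mul_le_mul_of_nonneg_left h3 hε.le, mul_nonneg hε.le hSnn]
end

section
/- Fix K ≥ 1, constants M ≥ 0, N*_s ≥ 0, K₀ > 0, ε > δ > 0, and a probability space (Ω, ℙ). Let p*_1, …, p*_K be nonnegative reals with Σ_{j=1}^K p*_j = 1 and let q*_1, …, q*_K be reals (the optimal estimates P*(S_j|ℓ⁻) and P*(X|S_j)). For each sample size N, let q̂_j^N, p̂_j^N : Ω → ℝ (j = 1, …, K) be random variables with 0 ≤ q̂_j^N ≤ M, and define the mixture estimators P̂_N := Σ_{j=1}^K q̂_j^N p̂_j^N and P* := Σ_{j=1}^K q*_j p*_j. Assume: (i) there exists N₀ such that for all N ≥ N₀, Σ_{j=1}^K |p̂_j^N − p*_j| · q̂_j^N ≤ δ almost surely; and (ii) for every N and every a > 0, ℙ(max_{1 ≤ j ≤ K} |q̂_j^N − q*_j| > a) ≤ 2 exp(−2 (1 + N*_s)² a² / (N K₀²)).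 Then for all N ≥ N₀, ℙ(|P̂_N − P*| > ε) ≤ 2 exp(−2 (1 + N*_s)² (ε − δ)² / (N K₀²)). -/
open MeasureTheory Finset

/-- Main theorem (Theorem 1): finite-sample concentration guarantee for the
light cone mixture estimator `P̂_N = Σ_j q̂_j^N p̂_j^N` against the optimal
estimate `P* = Σ_j q*_j p*_j`. -/
theorem light_cone_mixture_concentration
    {Ω : Type*} [MeasurableSpace Ω] (μ : Measure Ω) [IsProbabilityMeasure μ]
    (K : ℕ) (hK : 1 ≤ K) (M Ns K₀ ε δ : ℝ)
    (hM : 0 ≤ M) (hNs : 0 ≤ Ns) (hK₀ : 0 < K₀) (hδ : 0 < δ) (hδε : δ < ε)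
    (pstar qstar : Fin K → ℝ)
    (hpstar : ∀ j, 0 ≤ pstar j) (hpsum : ∑ j, pstar j = 1)
    (qhat phat : ℕ → Fin K → Ω → ℝ)
    (hqhat : ∀ N j ω, 0 ≤ qhat N j ω ∧ qhat N j ω ≤ M)
    (N₀ : ℕ)
    (hB : ∀ N, N₀ ≤ N →
      ∀ᵐ ω ∂μ, ∑ j, |phat N j ω - pstar j| * qhat N j ω ≤ δ)
    (hA : ∀ N : ℕ, ∀ a : ℝ, 0 < a →
      μ {ω | a < Finset.univ.sup'
          (Finset.univ_nonempty_iff.mpr (Fin.pos_iff_nonempty.mp (by omega)))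
          (fun j => |qhat N j ω - qstar j|)} ≤
        ENNReal.ofReal
          (2 * Real.exp (-(2 * (1 + Ns) ^ 2 * a ^ 2) / (N * K₀ ^ 2)))) :
    ∀ N, N₀ ≤ N →
      μ {ω | ε < |(∑ j, qhat N j ω * phat N j ω) - ∑ j, qstar j * pstar j|} ≤
        ENNReal.ofReal
          (2 * Real.exp (-(2 * (1 + Ns) ^ 2 * (ε - δ) ^ 2) / (N * K₀ ^ 2))) := by
  intro N hN
  have hne : (Finset.univ : Finset (Fin K)).Nonempty :=
    Finset.univ_nonempty_iff.mpr (Fin.pos_iff_nonempty.mp (by omega))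
  have haux : ∀ ω, ε < |(∑ j, qhat N j ω * phat N j ω) - ∑ j, qstar j * pstar j| →
      ∑ j, |phat N j ω - pstar j| * qhat N j ω ≤ δ →
      ε - δ < Finset.univ.sup' hne (fun j => |qhat N j ω - qstar j|) := by
    intro ω hε hδ'
    set S := Finset.univ.sup' hne (fun j => |qhat N j ω - qstar j|)
    have hbound : |(∑ j, qhat N j ω * phat N j ω) - ∑ j, qstar j * pstar j| ≤ δ + S := by
      have hsplit : (∑ j, qhat N j ω * phat N j ω) - ∑ j, qstar j * pstar j
          = (∑ j, qhat N j ω * (phat N j ω - pstar j)) + ∑ j, (qhat N j ω - qstar j) * pstar j := by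
        rw [← Finset.sum_add_distrib, ← Finset.sum_sub_distrib]
        congr 1; ext j; ring
      rw [hsplit]
      calc |(∑ j, qhat N j ω * (phat N j ω - pstar j)) + ∑ j, (qhat N j ω - qstar j) * pstar j|
          ≤ |∑ j, qhat N j ω * (phat N j ω - pstar j)| + |∑ j, (qhat N j ω - qstar j) * pstar j| :=
            abs_add_le _ _
        _ ≤ (∑ j, |qhat N j ω * (phat N j ω - pstar j)|) + ∑ j, |(qhat N j ω - qstar j) * pstar j| :=
            add_le_add (Finset.abs_sum_le_sum_abs _ _) (Finset.abs_sum_le_sum_abs _ _)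
        _ ≤ δ + S := by
            refine add_le_add ?_ ?_
            · calc ∑ j, |qhat N j ω * (phat N j ω - pstar j)|
                  = ∑ j, |phat N j ω - pstar j| * qhat N j ω := by
                    refine Finset.sum_congr rfl fun j _ => ?_
                    rw [abs_mul, abs_of_nonneg (hqhat N j ω).1]; ring
                _ ≤ δ := hδ'
            · calc ∑ j, |(qhat N j ω - qstar j) * pstar j|
                  = ∑ j, |qhat N j ω - qstar j| * pstar j := by
                    refine Finset.sum_congr rfl fun j _ => ?_
                    rw [abs_mul, abs_of_nonneg (hpstar j)]
                _ ≤ ∑ j, S * pstar j := by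
                    refine Finset.sum_le_sum fun j _ => ?_
                    exact mul_le_mul_of_nonneg_right
                      (Finset.le_sup' (fun j => |qhat N j ω - qstar j|) (Finset.mem_univ j))
                      (hpstar j)
                _ = S := by rw [← Finset.mul_sum, hpsum, mul_one]
    linarith
  have hsub : μ {ω | ε < |(∑ j, qhat N j ω * phat N j ω) - ∑ j, qstar j * pstar j|}
      ≤ μ {ω | ε - δ < Finset.univ.sup' hne (fun j => |qhat N j ω - qstar j|)} := by
    refine measure_mono_ae ?_
    filter_upwards [hB N hN] with ω hδ' hε
    exact haux ω hε hδ'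
  calc μ {ω | ε < |(∑ j, qhat N j ω * phat N j ω) - ∑ j, qstar j * pstar j|}
      ≤ μ {ω | ε - δ < Finset.univ.sup' hne (fun j => |qhat N j ω - qstar j|)} := hsub
    _ ≤ ENNReal.ofReal (2 * Real.exp (-(2 * (1 + Ns) ^ 2 * (ε - δ) ^ 2) / (N * K₀ ^ 2))) :=
        hA N (ε - δ) (by linarith)
end
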